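/- Let λ = (λ_a) ∈ Z_{≥0}^6 and let ν = (m_i^{(a)}) be a configuration satisfying the weight constraint Σ_{a∈I_0, i≥1} i m_i^{(a)} C_{ab} = L δ_{b,1} − λ_b for all b ∈ I_0. Then the following are equivalent: (1) p_i^{(a)} ≥ 0 for all i ≥ 1 and all a ∈ I_0; (2) p_i^{(a)} ≥ 0 for all i ≥ 1 and a ∈ I_0 such that m_i^{(a)} > 0. -/
import Mathlib


open scoped BigOperators

/-- The index set `I_0 = {1, …, 6}` of the classical Dynkin nodes of `E6`. -/
def I0 : Finset ℕ := Finset.Icc 1 6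

/-- Adjacency in the `E6` Dynkin diagram. -/
def adjPairs : List (ℕ × ℕ) :=
  [(1,2),(2,1),(2,3),(3,2),(3,4),(4,3),(4,5),(5,4),(3,6),(6,3)]

def Adj (a b : ℕ) : Prop := (a, b) ∈ adjPairs

instance (a b : ℕ) : Decidable (Adj a b) := by unfold Adj; infer_instance

/-- The Cartan matrix of `E6`. -/
def Cmat (a b : ℕ) : ℤ := if a = b then 2 else if Adj a b then -1 else 0

/-- The vacancy numbers `p_i^{(a)} = L δ_{a,1} − Σ_{b∈I_0} C_{ab} Σ_{j≥1} min(i,j) m_j^{(b)}`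
of a configuration `m`. -/
def vacp (L : ℕ) (m : ℕ → ℕ →₀ ℕ) (a i : ℕ) : ℤ :=
  (if a = 1 then (L : ℤ) else 0)
    - ∑ b ∈ I0, Cmat a b * ((m b).sum fun j mj => (min i j : ℤ) * (mj : ℤ))

private lemma adj_symm {a b : ℕ} (h : Adj a b) : Adj b a := by
  unfold Adj adjPairs at h ⊢
  fin_cases h <;> decide

private lemma cmat_symm (a b : ℕ) : Cmat a b = Cmat b a := by
  unfold Cmat
  by_cases h : a = b
  · simp [h]
  · have h' : ¬ b = a := fun h2 => h h2.symm
    by_cases h2 : Adj a b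
    · simp [h, h', h2, adj_symm h2]
    · have h3 : ¬ Adj b a := fun h3 => h2 (adj_symm h3)
      simp [h, h', h2, h3]

private lemma cmat_offdiag {a b : ℕ} (h : ¬ b = a) : Cmat a b ≤ 0 := by
  unfold Cmat
  split_ifs with h1 h2 <;> omega

private lemma sum_secdiff (m : ℕ →₀ ℕ) (h0 : m 0 = 0) (i : ℕ) (hi : 1 ≤ i) :
    (m.sum fun j mj => (min ((i:ℤ)-1) (j:ℤ)) * mj) + (m.sum fun j mj => (min ((i:ℤ)+1) (j:ℤ)) * mj)
      = 2 * (m.sum fun j mj => (min (i:ℤ) (j:ℤ)) * mj) - (m i : ℤ) := by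
  classical
  rw [Finsupp.sum, Finsupp.sum, Finsupp.sum, ← Finset.sum_add_distrib]
  have key : ∀ j ∈ m.support,
      (min ((i:ℤ)-1) (j:ℤ)) * m j + (min ((i:ℤ)+1) (j:ℤ)) * m j
        = 2 * ((min (i:ℤ) (j:ℤ)) * m j) - (if j = i then (m i : ℤ) else 0) := by
    intro j hj
    have hj0 : j ≠ 0 := fun h => (Finsupp.mem_support_iff.mp hj) (h ▸ h0)
    have e : (min ((i:ℤ)-1) (j:ℤ)) + (min ((i:ℤ)+1) (j:ℤ)) - 2 * min (i:ℤ) (j:ℤ)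
        = if j = i then -1 else 0 := by split_ifs <;> omega
    split_ifs at e ⊢ with h
    · subst h; linear_combination (m j : ℤ) * e
    · linear_combination (m j : ℤ) * e
  rw [Finset.sum_congr rfl key, Finset.sum_sub_distrib, ← Finset.mul_sum]
  congr 1
  rw [Finset.sum_ite_eq' m.support i (fun _ => (m i : ℤ))]
  split_ifs with h
  · rfl
  · simp [Finsupp.notMem_support_iff.mp h]

private lemma vacp_secdiff (L : ℕ) (m : ℕ → ℕ →₀ ℕ) (hm0 : ∀ a, m a 0 = 0)
    (a i : ℕ) (hi : 1 ≤ i) :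
    vacp L m a (i-1) + vacp L m a (i+1)
      = 2 * vacp L m a i + ∑ b ∈ I0, Cmat a b * (m b i : ℤ) := by
  unfold vacp
  have cast1 : ((i-1 : ℕ) : ℤ) = (i:ℤ) - 1 := by omega
  have cast2 : ((i+1 : ℕ) : ℤ) = (i:ℤ) + 1 := by push_cast; ring
  simp only [cast1, cast2]
  have sums : ∀ b ∈ I0,
      Cmat a b * ((m b).sum fun j mj => (min ((i:ℤ)-1) (j:ℤ)) * mj)
        + Cmat a b * ((m b).sum fun j mj => (min ((i:ℤ)+1) (j:ℤ)) * mj)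
      = Cmat a b * (2 * ((m b).sum fun j mj => (min (i:ℤ) (j:ℤ)) * mj) - (m b i : ℤ)) := by
    intro b _
    rw [← mul_add, sum_secdiff (m b) (hm0 b) i hi]
  have hS : (∑ b ∈ I0, Cmat a b * ((m b).sum fun j mj => (min ((i:ℤ)-1) (j:ℤ)) * mj))
      + (∑ b ∈ I0, Cmat a b * ((m b).sum fun j mj => (min ((i:ℤ)+1) (j:ℤ)) * mj))
      = 2 * (∑ b ∈ I0, Cmat a b * ((m b).sum fun j mj => (min (i:ℤ) (j:ℤ)) * mj))
        - ∑ b ∈ I0, Cmat a b * (m b i : ℤ) := by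
    rw [← Finset.sum_add_distrib, Finset.sum_congr rfl sums]
    rw [Finset.sum_congr rfl (fun b _ => mul_sub (Cmat a b) _ _), Finset.sum_sub_distrib]
    have h2 : ∀ b, Cmat a b * (2 * ((m b).sum fun j mj => (min (i:ℤ) (j:ℤ)) * mj))
        = 2 * (Cmat a b * ((m b).sum fun j mj => (min (i:ℤ) (j:ℤ)) * mj)) := fun b => by ring
    simp only [h2]
    rw [← Finset.mul_sum]
  linarith [hS]

private lemma vacp_zero (L : ℕ) (m : ℕ → ℕ →₀ ℕ) (a : ℕ) :
    vacp L m a 0 = if a = 1 then (L : ℤ) else 0 := by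
  unfold vacp
  have h : ∀ b ∈ I0,
      Cmat a b * ((m b).sum fun j mj => (min ((0:ℕ):ℤ) (j:ℤ)) * (mj:ℤ)) = 0 := by
    intro b _
    have : ((m b).sum fun j mj => (min ((0:ℕ):ℤ) (j:ℤ)) * (mj:ℤ)) = 0 := by
      rw [Finsupp.sum]
      apply Finset.sum_eq_zero
      intro j _
      have : min ((0:ℕ):ℤ) (j:ℤ) = 0 := by
        simp
      rw [this, zero_mul]
    rw [this, mul_zero]
  rw [Finset.sum_congr rfl h, Finset.sum_const, smul_zero, sub_zero]

private lemma vacp_bound (i a : ℕ) (ha : a ∈ I0) (m : ℕ → ℕ →₀ ℕ) :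
    (∑ b ∈ I0, Cmat a b * (m b i : ℤ)) ≤ 2 * (m a i : ℤ) := by
  classical
  calc (∑ b ∈ I0, Cmat a b * (m b i : ℤ))
      ≤ ∑ b ∈ I0, (if b = a then 2 * (m a i : ℤ) else 0) := by
        apply Finset.sum_le_sum
        intro b _
        by_cases h : b = a
        · subst h; simp [Cmat]
        · simp only [if_neg h]
          have := cmat_offdiag (a := a) (b := b) h
          have : (0:ℤ) ≤ (m b i : ℤ) := by positivity
          nlinarith [cmat_offdiag (a := a) (b := b) h, this]
    _ = 2 * (m a i : ℤ) := by rw [Finset.sum_ite_eq' I0 a (fun _ => 2 * (m a i : ℤ)), if_pos ha]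

private lemma vacp_large (L : ℕ) (lam : ℕ → ℤ) (m : ℕ → ℕ →₀ ℕ)
    (hwt : ∀ b ∈ I0,
      (∑ a ∈ I0, (m a).sum fun i mi => (i : ℤ) * (mi : ℤ) * Cmat a b)
        = (if b = 1 then (L : ℤ) else 0) - lam b)
    (a : ℕ) (ha : a ∈ I0) (i : ℕ)
    (hsupp : ∀ b ∈ I0, ∀ j ∈ (m b).support, j ≤ i) :
    vacp L m a i = lam a := by
  unfold vacp
  have step1 : ∀ b ∈ I0, Cmat a b * ((m b).sum fun j mj => (min i j : ℤ) * (mj:ℤ))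
      = (m b).sum fun j mj => (j:ℤ) * (mj:ℤ) * Cmat b a := by
    intro b hb
    have hg : ((m b).sum fun j mj => (min i j : ℤ) * (mj:ℤ))
        = (m b).sum fun j mj => (j:ℤ) * mj := by
      apply Finsupp.sum_congr
      intro j hj
      have := hsupp b hb j hj
      congr 1
      omega
    rw [hg, cmat_symm, mul_comm, Finsupp.sum_mul]
  rw [Finset.sum_congr rfl step1, hwt a ha]
  ring

/-- Lemma 5.5: for a configuration satisfying the weight constraint with `λ` dominant,
nonnegativity of all vacancy numbers is equivalent to nonnegativity at the rows
actually present in the configuration. -/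
theorem stmt8 (L : ℕ) (lam : ℕ → ℤ) (hlam : ∀ a ∈ I0, 0 ≤ lam a)
    (m : ℕ → ℕ →₀ ℕ) (hm0 : ∀ a, m a 0 = 0)
    (hwt : ∀ b ∈ I0,
      (∑ a ∈ I0, (m a).sum fun i mi => (i : ℤ) * (mi : ℤ) * Cmat a b)
        = (if b = 1 then (L : ℤ) else 0) - lam b) :
    (∀ a ∈ I0, ∀ i, 1 ≤ i → 0 ≤ vacp L m a i)
      ↔ (∀ a ∈ I0, ∀ i, 1 ≤ i → m a i ≠ 0 → 0 ≤ vacp L m a i) := by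
  classical
  constructor
  · exact fun h a ha i hi _ => h a ha i hi
  · intro h2 a ha i hi
    set N := (Finset.sup I0 fun b => (m b).support.sup id) + 1 with hNdef
    have hsupp : ∀ b ∈ I0, ∀ j ∈ (m b).support, j ≤ N := by
      intro b hb j hj
      have h1 : id j ≤ (m b).support.sup id := Finset.le_sup hj
      have h2' : (m b).support.sup id ≤ Finset.sup I0 (fun b => (m b).support.sup id) :=
        Finset.le_sup (f := fun b => (m b).support.sup id) hb
      simp only [id] at h1
      omega
    have hlarge : ∀ k, N ≤ k → vacp L m a k = lam a := fun k hk =>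
      vacp_large L lam m hwt a ha k (fun b hb j hj => le_trans (hsupp b hb j hj) hk)
    have h0 : 0 ≤ vacp L m a 0 := by
      rw [vacp_zero]; split_ifs <;> positivity
    by_contra hneg
    push_neg at hneg
    have hiN : i ≤ N := by
      by_contra hc
      rw [hlarge i (by omega)] at hneg
      exact absurd (hlam a ha) (not_le.mpr hneg)
    have hne : (Finset.Icc 0 N).Nonempty := ⟨0, by simp⟩
    set M := (Finset.Icc 0 N).inf' hne (vacp L m a) with hM
    have hmin : ∀ j, j ≤ N → M ≤ vacp L m a j := fun j hj =>
      Finset.inf'_le _ (by simp only [Finset.mem_Icc]; omega)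
    have hMneg : M < 0 := lt_of_le_of_lt (hmin i hiN) hneg
    have hexQ : ∃ j, vacp L m a j = M ∧ j ≤ N := by
      obtain ⟨j, hj1, hj2⟩ := Finset.exists_mem_eq_inf' hne (vacp L m a)
      exact ⟨j, hj2.symm, (Finset.mem_Icc.mp hj1).2⟩
    set i₀ := Nat.find hexQ with hi0
    obtain ⟨hQ1, hQ2⟩ := Nat.find_spec hexQ
    rw [← hi0] at hQ1 hQ2
    have hi₀pos : 1 ≤ i₀ := by
      by_contra hc
      have h00 : i₀ = 0 := by omega
      rw [h00] at hQ1
      linarith [h0, hQ1 ▸ hMneg]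
    have hi₀N : i₀ < N := by
      rcases lt_or_eq_of_le hQ2 with h | h
      · exact h
      · exfalso
        have := hlarge i₀ (le_of_eq h.symm)
        rw [this] at hQ1
        linarith [hlam a ha]
    by_cases hma : m a i₀ = 0
    · have hsd := vacp_secdiff L m hm0 a i₀ hi₀pos
      have hbd := vacp_bound i₀ a ha m
      have hmaz : ((m a i₀ : ℕ) : ℤ) = 0 := by rw [hma]; simp
      have hprev : M < vacp L m a (i₀ - 1) := by
        have hle : M ≤ vacp L m a (i₀ - 1) := hmin _ (by omega)
        have hne' : vacp L m a (i₀ - 1) ≠ M := fun he =>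
          Nat.find_min hexQ (show i₀ - 1 < i₀ by omega) ⟨he, by omega⟩
        exact lt_of_le_of_ne hle (fun he => hne' he.symm)
      have hnext : M ≤ vacp L m a (i₀ + 1) := hmin _ (by omega)
      rw [hQ1] at hsd
      rw [hmaz] at hbd
      linarith
    · have := h2 a ha i₀ hi₀pos hma
      rw [hQ1] at this
      linarith
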